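/- Let T be a rooted caterpillar tree on n leaves (a rooted binary phylogenetic X-tree with exactly one cherry) whose positive edge lengths satisfy the ultrametric condition, and let k be a branching value of T. Then the number of size-k maxPD sets of T is m(T,k) = n − k + 1. -/

import Mathlib

/-!
Rooted phylogenetic `X`-trees with positive edge lengths.

A tree on a finite vertex type `V` is encoded by its parent function: the root
has no parent, every other vertex has one, and iterating the parent function
reaches the root.  The edge into a non-root vertex `v` has length `len v`, and
`hgt v` is the distance from the root to `v`.  Leaves are the vertices with no
children; the taxon set `X` of the paper is the set `leaves` of leaves.
Every non-leaf, non-root vertex has out-degree (number of children) at least 2.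
-/

noncomputable section

attribute [local instance] Classical.propDecidable

structure PhyloTree (V : Type) [Fintype V] [DecidableEq V] where
  root : V
  parent : V → Option V
  len : V → ℝ
  hgt : V → ℝ
  parent_root : parent root = none
  parent_isSome : ∀ v, v ≠ root → (parent v).isSome
  reaches_root : ∀ v, Relation.ReflTransGen (fun a b => parent a = some b) v root
  hgt_root : hgt root = 0
  hgt_eq : ∀ v u, parent v = some u → hgt v = hgt u + len v
  len_pos : ∀ v, v ≠ root → 0 < len v
  outdeg_ge_two : ∀ v, v ≠ root → (∃ u, parent u = some v) →
    2 ≤ Set.ncard {u | parent u = some v}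

namespace PhyloTree

variable {V : Type} [Fintype V] [DecidableEq V]

/-- `T.step a b` : `b` is the parent of `a`. -/
def step (T : PhyloTree V) (a b : V) : Prop := T.parent a = some b

/-- `T.anc u v` : `u` is an ancestor of `v`, i.e. `u` lies on the (unique) path
from the root to `v` (reflexively). -/
def anc (T : PhyloTree V) (u v : V) : Prop := Relation.ReflTransGen T.step v u

/-- a leaf is a vertex with no children. -/
def IsLeaf (T : PhyloTree V) (v : V) : Prop := ∀ u, T.parent u ≠ some v

/-- the leaf set (the taxon set `X`). -/
def leaves (T : PhyloTree V) : Set V := {v | T.IsLeaf v}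

/-- Phylogenetic diversity of a set `Y`: the total length of all edges `e`
whose set of descendant leaves meets `Y` (the edge into a non-root vertex `v`
has length `T.len v`). -/
def PD (T : PhyloTree V) (Y : Set V) : ℝ :=
  ∑ v : V, if v ≠ T.root ∧ ∃ x ∈ Y, T.IsLeaf x ∧ T.anc v x then T.len v else 0

/-- the ultrametric condition: all leaves are at the same distance from the root. -/
def Ultrametric (T : PhyloTree V) : Prop :=
  ∀ x y, T.IsLeaf x → T.IsLeaf y → T.hgt x = T.hgt y

/-- `R d`: the set of vertices within distance `d` above some leaf. -/
def R (T : PhyloTree V) (d : ℝ) : Set V :=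
  {v | ∃ x, T.IsLeaf x ∧ T.anc v x ∧ T.hgt x - T.hgt v ≤ d}

/-- adjacency in the forest induced by `T` on a vertex set `S`. -/
def adjIn (T : PhyloTree V) (S : Set V) (u v : V) : Prop :=
  u ∈ S ∧ v ∈ S ∧ (T.parent u = some v ∨ T.parent v = some u)

/-- the connected components of the forest induced by `T` on `S`. -/
def components (T : PhyloTree V) (S : Set V) : Set (Set V) :=
  {C | ∃ v ∈ S, C = S ∩ {u | Relation.ReflTransGen (T.adjIn S) v u}}

/-- `c d`: the number of connected components of the forest `T[R(d)]`. -/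
def ccount (T : PhyloTree V) (d : ℝ) : ℕ := (T.components (T.R d)).ncard

/-- `k` is a branching value if `T[R(d)]` has exactly `k` components for some `d ≥ 0`. -/
def IsBranchingValue (T : PhyloTree V) (k : ℕ) : Prop := ∃ d : ℝ, 0 ≤ d ∧ T.ccount d = k

/-- the branching distance `d_k = min {d : c(d) = k}`. -/
def branchDist (T : PhyloTree V) (k : ℕ) : ℝ := sInf {d | 0 ≤ d ∧ T.ccount d = k}

/-- `k⁻`: the largest branching value `≤ k`. -/
def kminus (T : PhyloTree V) (k : ℕ) : ℕ := sSup {j | j ≤ k ∧ T.IsBranchingValue j}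

/-- `k⁺`: the smallest branching value `≥ k`. -/
def kplus (T : PhyloTree V) (k : ℕ) : ℕ := sInf {j | k ≤ j ∧ T.IsBranchingValue j}

/-- `A` is a size-`k` maxPD set. -/
def IsMaxPD (T : PhyloTree V) (k : ℕ) (A : Set V) : Prop :=
  A ⊆ T.leaves ∧ A.ncard = k ∧ ∀ Y ⊆ T.leaves, Y.ncard = k → T.PD Y ≤ T.PD A

/-- `A` is a size-`k` minPD set. -/
def IsMinPD (T : PhyloTree V) (k : ℕ) (A : Set V) : Prop :=
  A ⊆ T.leaves ∧ A.ncard = k ∧ ∀ Y ⊆ T.leaves, Y.ncard = k → T.PD A ≤ T.PD Y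

/-- `m T k`: the number of size-`k` maxPD sets of `T`. -/
def m (T : PhyloTree V) (k : ℕ) : ℕ := {A : Set V | T.IsMaxPD k A}.ncard

/-- `T` is binary: every non-leaf vertex has exactly two children. -/
def Binary (T : PhyloTree V) : Prop :=
  ∀ v, ¬ T.IsLeaf v → Set.ncard {u | T.parent u = some v} = 2

end PhyloTree

namespace PhyloTree

variable {V : Type} [Fintype V] [DecidableEq V]

/-- a cherry: a two-element set of leaves with a common parent. -/
def IsCherry (T : PhyloTree V) (p : Set V) : Prop :=
  ∃ x y v, x ≠ y ∧ p = {x, y} ∧ T.IsLeaf x ∧ T.IsLeaf y ∧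
    T.parent x = some v ∧ T.parent y = some v

/-- a rooted caterpillar tree: a rooted binary phylogenetic tree with exactly
one cherry. -/
def IsCaterpillar (T : PhyloTree V) : Prop :=
  T.Binary ∧ ∃! p : Set V, T.IsCherry p

end PhyloTree

/-!
In an ultrametric caterpillar every internal vertex is an ancestor of the parent `c` of the
unique cherry `{x₁, x₂}`, so the internal vertices form a chain. For a set `t` of leaves the
edges spanned by `t` are therefore its pendant edges together with the path from the root to
the parent of the leaf `y ∈ t` with the shortest pendant edge, and `PD t = h + ∑_{x ∈ t \ y} ℓ x`
with `h` the common leaf height. The pendant lengths of distinct leaves differ except on the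
cherry, whose two lengths are the smallest. So for `k < n` the `k - 1` leaves with the longest
pendant edges form a set `u` strictly above all other leaves, and the size-`k` maxPD sets are
exactly the `n - k + 1` sets `insert y u` with `y ∉ u`; for `k = n` the leaf set is the only one.
-/

-- leaves the section opened above, whose local instance `Classical.propDecidable` would
-- compete with the `DecidableEq` binders below
end

section IsTopSet

variable {α : Type*} [DecidableEq α] (ℓ : α → ℝ)

def IsTopSet (s u : Finset α) : Prop :=
  u ⊆ s ∧ ∀ x ∈ u, ∀ y ∈ s \ u, ℓ y < ℓ x

variable {ℓ}

theorem exists_isTopSet {j : ℕ} :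
    ∀ {s : Finset α}, Set.InjOn ℓ s → j ≤ s.card → ∃ u, IsTopSet ℓ s u ∧ u.card = j := by
  induction j with
  | zero => exact fun _ _ => ⟨∅, ⟨Finset.empty_subset _, by simp⟩, rfl⟩
  | succ j ih =>
    intro s hs hj
    obtain ⟨x₀, hx₀, hmax⟩ := s.exists_max_image ℓ (Finset.card_pos.mp (by omega))
    obtain ⟨u, ⟨hus, htop⟩, rfl⟩ := ih (hs.mono (Finset.coe_subset.mpr (s.erase_subset x₀)))
      (by rw [Finset.card_erase_of_mem hx₀]; omega)
    have hx₀u : x₀ ∉ u := fun h => (Finset.mem_erase.mp (hus h)).1 rfl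
    refine ⟨insert x₀ u, ⟨Finset.insert_subset hx₀ (hus.trans (s.erase_subset x₀)), ?_⟩,
      Finset.card_insert_of_notMem hx₀u⟩
    intro x hx y hy
    obtain ⟨hys, hyu⟩ := Finset.mem_sdiff.mp hy
    rw [Finset.mem_insert, not_or] at hyu
    rcases Finset.mem_insert.mp hx with rfl | hxu
    · exact (hmax y hys).lt_of_ne fun h => hyu.1 (hs hys hx₀ h)
    · exact htop x hxu y (Finset.mem_sdiff.mpr ⟨Finset.mem_erase.mpr ⟨hyu.1, hys⟩, hyu.2⟩)

theorem IsTopSet.sum_lt {s u t : Finset α} (hu : IsTopSet ℓ s u) (ht : t ⊆ s)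
    (hcard : t.card = u.card) (hne : t ≠ u) : ∑ x ∈ t, ℓ x < ∑ x ∈ u, ℓ x := by
  have hcard' : (t \ u).card = (u \ t).card := Finset.card_sdiff_comm hcard
  have hut : (u \ t).Nonempty := Finset.sdiff_nonempty.mpr fun h =>
    hne (Finset.eq_of_subset_of_card_le h hcard.le).symm
  have htu : (t \ u).Nonempty := Finset.card_pos.mp (hcard' ▸ Finset.card_pos.mpr hut)
  obtain ⟨x₀, hx₀, hmin⟩ := (u \ t).exists_min_image ℓ hut
  have hdiff : ∑ y ∈ t \ u, ℓ y < ∑ x ∈ u \ t, ℓ x := calc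
    ∑ y ∈ t \ u, ℓ y < ∑ _y ∈ t \ u, ℓ x₀ := Finset.sum_lt_sum_of_nonempty htu fun y hy =>
        hu.2 x₀ (Finset.mem_sdiff.mp hx₀).1 y
          (Finset.mem_sdiff.mpr ⟨ht (Finset.mem_sdiff.mp hy).1, (Finset.mem_sdiff.mp hy).2⟩)
    _ = (u \ t).card • ℓ x₀ := by rw [Finset.sum_const, hcard']
    _ ≤ ∑ x ∈ u \ t, ℓ x := Finset.card_nsmul_le_sum _ _ _ hmin
  have h₁ := Finset.sum_inter_add_sum_sdiff t u ℓ
  have h₂ := Finset.sum_inter_add_sum_sdiff u t ℓ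
  rw [Finset.inter_comm] at h₂
  linarith

end IsTopSet

namespace PhyloTree

open Relation
open scoped Classical

variable {V : Type} [Fintype V] [DecidableEq V] {T : PhyloTree V}

lemma step_ne_root {a b : V} (h : T.step a b) : a ≠ T.root := by
  rintro rfl
  simp [step, T.parent_root] at h

lemma exists_step {a : V} (h : a ≠ T.root) : ∃ b, T.step a b :=
  Option.isSome_iff_exists.mp (T.parent_isSome a h)

lemma step_rightUnique : Relator.RightUnique T.step :=
  fun _ _ _ h₁ h₂ => Option.some_injective _ (h₁.symm.trans h₂)

lemma hgt_lt_of_step {a b : V} (h : T.step a b) : T.hgt b < T.hgt a := by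
  linarith [T.hgt_eq a b h, T.len_pos a (step_ne_root h)]

lemma hgt_le_of_anc {u v : V} (h : T.anc u v) : T.hgt u ≤ T.hgt v := by
  induction h with
  | refl => exact le_rfl
  | tail _ hstep ih => exact (hgt_lt_of_step hstep).le.trans ih

lemma anc_trans {u v w : V} (h₁ : T.anc u v) (h₂ : T.anc v w) : T.anc u w := h₂.trans h₁

lemma eq_of_anc_of_hgt_le {u v : V} (h : T.anc u v) (hle : T.hgt v ≤ T.hgt u) : u = v := by
  rcases h.cases_tail with rfl | ⟨b, hb, hstep⟩
  · rfl
  · linarith [hgt_lt_of_step hstep, hgt_le_of_anc hb]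

lemma hgt_lt_of_anc_of_ne {u v : V} (h : T.anc u v) (hne : u ≠ v) : T.hgt u < T.hgt v :=
  (hgt_le_of_anc h).lt_of_ne fun he => hne (eq_of_anc_of_hgt_le h he.ge)

lemma anc_total {u v x : V} (hu : T.anc u x) (hv : T.anc v x) : T.anc u v ∨ T.anc v u :=
  (ReflTransGen.total_of_right_unique step_rightUnique hu hv).symm

lemma anc_of_anc_child {v u p : V} (hp : T.step u p) (h : T.anc v u) (hne : v ≠ u) :
    T.anc v p := by
  rcases h.cases_head with rfl | ⟨b, hb, hbv⟩
  · exact absurd rfl hne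
  · rwa [step_rightUnique hp hb]

lemma IsLeaf.eq_of_anc {x w : V} (hx : T.IsLeaf x) (h : T.anc x w) : w = x := by
  rcases h.cases_tail with rfl | ⟨b, _, hstep⟩
  · rfl
  · exact absurd hstep (hx b)

lemma IsLeaf.ne_root {x : V} (hx : T.IsLeaf x) (hroot : ¬ T.IsLeaf T.root) : x ≠ T.root :=
  fun h => hroot (h ▸ hx)

lemma not_isLeaf_root_of_step {a b : V} (h : T.step a b) : ¬ T.IsLeaf T.root := by
  rcases (T.reaches_root a).cases_tail with h' | ⟨c, _, hstep⟩
  · exact absurd h'.symm (step_ne_root h)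
  · exact fun hroot => hroot c hstep

lemma sum_len_anc (T : PhyloTree V) (u : V) :
    ∑ v ∈ Finset.univ.filter (fun v => v ≠ T.root ∧ T.anc v u), T.len v = T.hgt u := by
  induction T.reaches_root u using ReflTransGen.head_induction_on with
  | refl =>
    rw [T.hgt_root, Finset.sum_eq_zero]
    intro v hv
    obtain ⟨hvr, hanc⟩ := (Finset.mem_filter.mp hv).2
    rcases hanc.cases_head with rfl | ⟨b, hb, _⟩
    · exact absurd rfl hvr
    · simp [step, T.parent_root] at hb
  | @head a c hstep _ ih =>
    have hpath : Finset.univ.filter (fun v => v ≠ T.root ∧ T.anc v a)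
        = insert a (Finset.univ.filter (fun v => v ≠ T.root ∧ T.anc v c)) := by
      ext v
      simp only [Finset.mem_filter, Finset.mem_univ, true_and, Finset.mem_insert]
      constructor
      · rintro ⟨hv, hanc⟩
        exact (eq_or_ne v a).imp id fun hva => ⟨hv, anc_of_anc_child hstep hanc hva⟩
      · rintro (rfl | ⟨hv, hanc⟩)
        · exact ⟨step_ne_root hstep, ReflTransGen.refl⟩
        · exact ⟨hv, hanc.head hstep⟩
    have ha : a ∉ Finset.univ.filter (fun v => v ≠ T.root ∧ T.anc v c) := fun h =>
      (hgt_lt_of_step hstep).not_ge (hgt_le_of_anc (Finset.mem_filter.mp h).2.2)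
    rw [hpath, Finset.sum_insert ha, ih, T.hgt_eq a c hstep]
    ring

instance (S : Set V) : Std.Symm (T.adjIn S) := ⟨fun _ _ h => ⟨h.2.1, h.1, h.2.2.symm⟩⟩

lemma reflTransGen_adjIn_of_anc {S : Set V} {v x : V} (h : T.anc v x)
    (hS : ∀ w, T.anc v w → T.anc w x → w ∈ S) : ReflTransGen (T.adjIn S) v x := by
  induction h with
  | refl => exact ReflTransGen.refl
  | @tail b c hvb hcb ih =>
    have hc : T.anc c b := ReflTransGen.single hcb
    refine ReflTransGen.head ⟨hS c ReflTransGen.refl (hvb.tail hcb), hS b hc hvb, Or.inr hcb⟩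
      (ih fun w hbw hwx => hS w (anc_trans hc hbw) hwx)

lemma ccount_le_ncard_leaves (T : PhyloTree V) (d : ℝ) : T.ccount d ≤ T.leaves.ncard := by
  let comp : V → Set V := fun x => T.R d ∩ {u | ReflTransGen (T.adjIn (T.R d)) x u}
  suffices T.components (T.R d) ⊆ comp '' T.leaves from
    (Set.ncard_le_ncard this (Set.toFinite _)).trans (Set.ncard_image_le (Set.toFinite _))
  rintro C ⟨v, ⟨x, hx, hvx, hdist⟩, rfl⟩
  have hpath : ReflTransGen (T.adjIn (T.R d)) v x := reflTransGen_adjIn_of_anc hvx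
    fun w hvw hwx => ⟨x, hx, hwx, by linarith [hgt_le_of_anc hvw]⟩
  refine ⟨x, hx, Set.ext fun u => and_congr_right fun _ => ⟨fun hxu => hpath.trans hxu,
    fun hvu => (Std.Symm.symm _ _ hpath).trans hvu⟩⟩

lemma le_ncard_leaves_of_isBranchingValue {k : ℕ} (hk : T.IsBranchingValue k) :
    k ≤ T.leaves.ncard := by
  obtain ⟨d, -, rfl⟩ := hk
  exact T.ccount_le_ncard_leaves d

lemma m_ncard_leaves (T : PhyloTree V) : T.m T.leaves.ncard = 1 := by
  have hleaves : ∀ {A}, A ⊆ T.leaves → A.ncard = T.leaves.ncard → A = T.leaves :=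
    fun hA hcard => Set.eq_of_subset_of_ncard_le hA hcard.ge (Set.toFinite _)
  suffices {A | T.IsMaxPD T.leaves.ncard A} = {T.leaves} by rw [m, this, Set.ncard_singleton]
  ext A
  refine ⟨fun hA => hleaves hA.1 hA.2.1, ?_⟩
  rintro rfl
  exact ⟨subset_rfl, rfl, fun Y hY hcard => (hleaves hY hcard ▸ le_rfl)⟩

lemma PD_eq_sum_filter (T : PhyloTree V) (Y : Set V) : T.PD Y =
    ∑ v ∈ Finset.univ.filter (fun v => v ≠ T.root ∧ ∃ x ∈ Y, T.IsLeaf x ∧ T.anc v x), T.len v := by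
  rw [PD, Finset.sum_filter]

lemma PD_eq_hgt_add_sum (hU : T.Ultrametric) {c : V} (hc : ∀ w, ¬ T.IsLeaf w → T.anc w c)
    {t : Finset V} (ht : ∀ x ∈ t, T.IsLeaf x) {y p : V} (hy : y ∈ t)
    (hmin : ∀ x ∈ t, T.len y ≤ T.len x) (hyp : T.step y p) :
    T.PD ↑t = T.hgt p + ∑ x ∈ t, T.len x := by
  have hroot : ¬ T.IsLeaf T.root := not_isLeaf_root_of_step hyp
  have hp : ¬ T.IsLeaf p := fun h => h y hyp
  -- by ultrametricity a longer pendant edge hangs from a higher parent, and parents are comparable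
  have hpar : ∀ x ∈ t, ∀ q, T.step x q → T.anc q p := by
    intro x hx q hxq
    have hq : T.hgt q ≤ T.hgt p := by
      linarith [T.hgt_eq x q hxq, T.hgt_eq y p hyp, hU x y (ht x hx) (ht y hy), hmin x hx]
    rcases anc_total (hc q fun h => h x hxq) (hc p hp) with h | h
    · exact h
    · exact eq_of_anc_of_hgt_le h hq ▸ ReflTransGen.refl
  have hdisj : Disjoint t (Finset.univ.filter (fun v => v ≠ T.root ∧ T.anc v p)) :=
    Finset.disjoint_left.mpr fun v hv hvp =>
      hp ((ht v hv).eq_of_anc (Finset.mem_filter.mp hvp).2.2 ▸ ht v hv)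
  rw [PD_eq_sum_filter, ← sum_len_anc, add_comm, ← Finset.sum_union hdisj]
  congr 1
  ext v
  simp only [Finset.mem_filter, Finset.mem_univ, true_and, Finset.mem_union, Finset.mem_coe]
  constructor
  · rintro ⟨hv, x, hx, -, hvx⟩
    obtain ⟨q, hxq⟩ := exists_step ((ht x hx).ne_root hroot)
    exact (eq_or_ne v x).imp (fun h : v = x => h ▸ hx) fun hne =>
      ⟨hv, anc_trans (anc_of_anc_child hxq hvx hne) (hpar x hx q hxq)⟩
  · rintro (hv | ⟨hv, hvp⟩)
    · exact ⟨(ht v hv).ne_root hroot, v, hv, ht v hv, ReflTransGen.refl⟩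
    · exact ⟨hv, y, hy, ht y hy, hvp.head hyp⟩

section PD

variable (hU : T.Ultrametric) {c : V} (hc : ∀ w, ¬ T.IsLeaf w → T.anc w c)
  (hroot : ¬ T.IsLeaf T.root) {s u : Finset V} (hs : ∀ x ∈ s, T.IsLeaf x)
  (hu : IsTopSet T.len s u)

include hU hc hroot hs hu

lemma PD_insert_of_isTopSet {y : V} (hy : y ∈ s \ u) :
    T.PD ↑(insert y u) = T.hgt y + ∑ x ∈ u, T.len x := by
  obtain ⟨hys, hyu⟩ := Finset.mem_sdiff.mp hy
  obtain ⟨p, hyp⟩ := exists_step ((hs y hys).ne_root hroot)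
  have hmin : ∀ x ∈ insert y u, T.len y ≤ T.len x := by
    intro x hx
    rcases Finset.mem_insert.mp hx with rfl | hxu
    · exact le_rfl
    · exact (hu.2 x hxu y hy).le
  have hleaf : ∀ x ∈ insert y u, T.IsLeaf x :=
    fun x hx => hs x (Finset.insert_subset hys hu.1 hx)
  rw [PD_eq_hgt_add_sum hU hc hleaf (Finset.mem_insert_self y u) hmin hyp,
    Finset.sum_insert hyu, T.hgt_eq y p hyp, add_assoc]

lemma PD_lt_of_isTopSet {t : Finset V} (ht : t ⊆ s) (hcard : t.card = u.card + 1)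
    (hne : ∀ y ∈ s \ u, t ≠ insert y u) {w : V} (hw : T.IsLeaf w) :
    T.PD ↑t < T.hgt w + ∑ x ∈ u, T.len x := by
  obtain ⟨y, hy, hmin⟩ := t.exists_min_image T.len (Finset.card_pos.mp (by omega))
  obtain ⟨p, hyp⟩ := exists_step ((hs y (ht hy)).ne_root hroot)
  have herase : t.erase y ≠ u := by
    rintro rfl
    exact hne y (Finset.mem_sdiff.mpr ⟨ht hy, Finset.notMem_erase y t⟩)
      (Finset.insert_erase hy).symm
  have hlt := hu.sum_lt ((t.erase_subset y).trans ht)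
    (by rw [Finset.card_erase_of_mem hy, hcard, Nat.add_sub_cancel]) herase
  rw [PD_eq_hgt_add_sum hU hc (fun z hz => hs z (ht hz)) hy hmin hyp,
    ← Finset.sum_erase_add t T.len hy]
  linarith [T.hgt_eq y p hyp, hU y w (hs y (ht hy)) hw]

end PD

lemma setOf_isMaxPD_of_isTopSet (hU : T.Ultrametric) {c : V}
    (hc : ∀ w, ¬ T.IsLeaf w → T.anc w c) (hroot : ¬ T.IsLeaf T.root) {u : Finset V}
    (hu : IsTopSet T.len T.leaves.toFinset u) :
    {A | T.IsMaxPD (u.card + 1) A} =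
      (fun y => (↑(insert y u) : Set V)) '' ↑(T.leaves.toFinset \ u) := by
  set s := T.leaves.toFinset
  have hs : ∀ x ∈ s, T.IsLeaf x := fun x hx => Set.mem_toFinset.mp hx
  have hsub : ∀ {t : Finset V}, (t : Set V) ⊆ T.leaves ↔ t ⊆ s := Set.subset_toFinset.symm
  have hcand : ∀ y ∈ s \ u, insert y u ⊆ s ∧ (insert y u).card = u.card + 1 := fun y hy =>
    ⟨Finset.insert_subset (Finset.mem_sdiff.mp hy).1 hu.1,
      Finset.card_insert_of_notMem (Finset.mem_sdiff.mp hy).2⟩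
  have hleaf : ∀ y ∈ s \ u, T.IsLeaf y := fun y hy => hs y (Finset.mem_sdiff.mp hy).1
  ext A
  constructor
  · rintro ⟨hA, hcard, hAmax⟩
    obtain ⟨t, rfl⟩ := (Set.toFinite A).exists_finset_coe
    rw [Set.ncard_coe_finset] at hcard
    by_contra hne
    obtain ⟨y, hyt, hyu⟩ := Finset.exists_mem_notMem_of_card_lt_card (s := u) (t := t) (by omega)
    have hy : y ∈ s \ u := Finset.mem_sdiff.mpr ⟨hsub.mp hA hyt, hyu⟩
    have hle := hAmax _ (hsub.mpr (hcand y hy).1) (by rw [Set.ncard_coe_finset, (hcand y hy).2])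
    rw [PD_insert_of_isTopSet hU hc hroot hs hu hy] at hle
    exact hle.not_gt (PD_lt_of_isTopSet hU hc hroot hs hu (hsub.mp hA) hcard
      (fun z hz h => hne ⟨z, hz, h ▸ rfl⟩) (hleaf y hy))
  · rintro ⟨y, hy, rfl⟩
    refine ⟨hsub.mpr (hcand y hy).1, by rw [Set.ncard_coe_finset, (hcand y hy).2],
      fun Y hY hcard => ?_⟩
    obtain ⟨t, rfl⟩ := (Set.toFinite Y).exists_finset_coe
    rw [Set.ncard_coe_finset] at hcard
    rw [PD_insert_of_isTopSet hU hc hroot hs hu hy]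
    by_cases ht : ∃ z ∈ s \ u, t = insert z u
    · obtain ⟨z, hz, rfl⟩ := ht
      rw [PD_insert_of_isTopSet hU hc hroot hs hu hz, hU z y (hleaf z hz) (hleaf y hy)]
    · exact (PD_lt_of_isTopSet hU hc hroot hs hu (hsub.mp hY) hcard
        (fun z hz h => ht ⟨z, hz, h⟩) (hleaf y hy)).le

lemma m_eq_of_isTopSet (hU : T.Ultrametric) {c : V} (hc : ∀ w, ¬ T.IsLeaf w → T.anc w c)
    (hroot : ¬ T.IsLeaf T.root) {u : Finset V} (hu : IsTopSet T.len T.leaves.toFinset u) :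
    T.m (u.card + 1) = T.leaves.ncard - u.card := by
  have hinj : Set.InjOn (fun y => (↑(insert y u) : Set V)) ↑(T.leaves.toFinset \ u) :=
    fun y hy z _ h => (Finset.insert_inj (Finset.mem_sdiff.mp hy).2).mp (Finset.coe_inj.mp h)
  rw [m, setOf_isMaxPD_of_isTopSet hU hc hroot hu, hinj.ncard_image, Set.ncard_coe_finset,
    Finset.card_sdiff_of_subset hu.1, Set.ncard_eq_toFinset_card']

lemma IsCherry.isLeaf {p : Set V} (hp : T.IsCherry p) {x : V} (hx : x ∈ p) : T.IsLeaf x := by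
  obtain ⟨y, z, -, -, rfl, hy, hz, -, -⟩ := hp
  rcases hx with rfl | rfl
  exacts [hy, hz]

lemma exists_isCherry_anc (hB : T.Binary) {v : V} (hv : ¬ T.IsLeaf v) :
    ∃ p, T.IsCherry p ∧ ∀ x ∈ p, T.anc v x := by
  obtain ⟨w, hw, hmax⟩ := (Finset.univ.filter fun w => T.anc v w ∧ ¬ T.IsLeaf w).exists_max_image
    T.hgt ⟨v, Finset.mem_filter.mpr ⟨Finset.mem_univ v, ReflTransGen.refl, hv⟩⟩
  obtain ⟨hvw, hw⟩ := (Finset.mem_filter.mp hw).2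
  obtain ⟨x, y, hxy, hchildren⟩ := Set.ncard_eq_two.mp (hB w hw)
  have hx : T.step x w := show x ∈ {u | T.parent u = some w} from hchildren ▸ Or.inl rfl
  have hy : T.step y w := show y ∈ {u | T.parent u = some w} from hchildren ▸ Or.inr rfl
  -- a deepest internal vertex below `v` has only leaves as children
  have hleaf : ∀ z, T.step z w → T.IsLeaf z := fun z hz => by
    by_contra hz'
    have hvz : T.anc v z := anc_trans hvw (ReflTransGen.single hz)
    exact (hgt_lt_of_step hz).not_ge
      (hmax z (Finset.mem_filter.mpr ⟨Finset.mem_univ z, hvz, hz'⟩))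
  refine ⟨{x, y}, ⟨x, y, w, hxy, rfl, hleaf x hx, hleaf y hy, hx, hy⟩, ?_⟩
  rintro z (rfl | rfl)
  exacts [anc_trans hvw (ReflTransGen.single hx), anc_trans hvw (ReflTransGen.single hy)]

section Caterpillar

variable {x₁ x₂ c : V} (huniq : ∀ p, T.IsCherry p → p = {x₁, x₂}) (hx₁ : T.step x₁ c)

include huniq hx₁

lemma anc_of_not_isLeaf (hB : T.Binary) {w : V} (hw : ¬ T.IsLeaf w) : T.anc w c := by
  obtain ⟨p, hp, hwp⟩ := exists_isCherry_anc hB hw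
  have hx₁p : x₁ ∈ p := huniq p hp ▸ Or.inl rfl
  exact anc_of_anc_child hx₁ (hwp x₁ hx₁p) fun h => hw (h ▸ hp.isLeaf hx₁p)

lemma len_lt_len_of_ne (hU : T.Ultrametric) (hB : T.Binary) (hL₁ : T.IsLeaf x₁) {y : V}
    (hy : T.IsLeaf y) (hy₁ : y ≠ x₁) (hy₂ : y ≠ x₂) : T.len x₁ < T.len y := by
  obtain ⟨p, hyp⟩ := exists_step (hy.ne_root (not_isLeaf_root_of_step hx₁))
  have hpc : p ≠ c := by
    rintro rfl
    have hy' : y ∈ ({x₁, x₂} : Set V) :=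
      huniq {y, x₁} ⟨y, x₁, p, hy₁, rfl, hy, hL₁, hyp, hx₁⟩ ▸ Or.inl rfl
    rcases hy' with h | h
    exacts [hy₁ h, hy₂ h]
  have hlt := hgt_lt_of_anc_of_ne (anc_of_not_isLeaf huniq hx₁ hB fun h => h y hyp) hpc
  linarith [T.hgt_eq y p hyp, T.hgt_eq x₁ c hx₁, hU y x₁ hy hL₁]

lemma len_injOn (hU : T.Ultrametric) (hB : T.Binary) :
    Set.InjOn T.len (T.leaves \ {x₁, x₂}) := by
  rintro y ⟨hy, hy₁₂⟩ y' ⟨hy', -⟩ hlen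
  by_contra hne
  have hroot := not_isLeaf_root_of_step hx₁
  obtain ⟨p, hyp⟩ := exists_step (IsLeaf.ne_root hy hroot)
  obtain ⟨p', hyp'⟩ := exists_step (IsLeaf.ne_root hy' hroot)
  have hhgt : T.hgt p = T.hgt p' := by
    linarith [T.hgt_eq y p hyp, T.hgt_eq y' p' hyp', hU y y' hy hy']
  have hpp : p = p' := by
    rcases anc_total (anc_of_not_isLeaf huniq hx₁ hB fun h => h y hyp)
      (anc_of_not_isLeaf huniq hx₁ hB fun h => h y' hyp') with h | h
    · exact eq_of_anc_of_hgt_le h hhgt.ge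
    · exact (eq_of_anc_of_hgt_le h hhgt.le).symm
  subst hpp
  exact hy₁₂ (huniq {y, y'} ⟨y, y', p, hne, rfl, hy, hy', hyp, hyp'⟩ ▸ Or.inl rfl)

lemma exists_isTopSet_leaves (hU : T.Ultrametric) (hB : T.Binary) (hL₁ : T.IsLeaf x₁)
    (hL₂ : T.IsLeaf x₂) (hx₂ : T.step x₂ c) {j : ℕ} (hj : j + 2 ≤ T.leaves.ncard) :
    ∃ u, IsTopSet T.len T.leaves.toFinset u ∧ u.card = j := by
  rw [Set.ncard_eq_toFinset_card'] at hj
  set s := T.leaves.toFinset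
  have hinj : Set.InjOn T.len ↑(s \ {x₁, x₂}) := by
    rw [Finset.coe_sdiff, Set.coe_toFinset, Finset.coe_pair]
    exact len_injOn huniq hx₁ hU hB
  have hcard : j ≤ (s \ {x₁, x₂}).card := by
    have := Finset.le_card_sdiff {x₁, x₂} s
    have := Finset.card_le_two (a := x₁) (b := x₂)
    omega
  obtain ⟨u, ⟨hus, htop⟩, rfl⟩ := exists_isTopSet hinj hcard
  refine ⟨u, ⟨hus.trans Finset.sdiff_subset, fun x hx y hy => ?_⟩, rfl⟩
  obtain ⟨hxs, hx₁₂⟩ := Finset.mem_sdiff.mp (hus hx)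
  have hxl : T.IsLeaf x := Set.mem_toFinset.mp hxs
  have hlt : T.len x₁ < T.len x := len_lt_len_of_ne huniq hx₁ hU hB hL₁ hxl
    (fun h => hx₁₂ (by simp [h])) (fun h => hx₁₂ (by simp [h]))
  obtain ⟨hys, hyu⟩ := Finset.mem_sdiff.mp hy
  by_cases hy₁₂ : y ∈ ({x₁, x₂} : Finset V)
  · rcases Finset.mem_insert.mp hy₁₂ with rfl | hy₂
    · exact hlt
    · rw [Finset.mem_singleton.mp hy₂]
      linarith [T.hgt_eq x₂ c hx₂, T.hgt_eq x₁ c hx₁, hU x₂ x₁ hL₂ hL₁]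
  · exact htop x hx y (Finset.mem_sdiff.mpr ⟨Finset.mem_sdiff.mpr ⟨hys, hy₁₂⟩, hyu⟩)

end Caterpillar

end PhyloTree

/-- For an ultrametric rooted caterpillar tree on `n` leaves
and a branching value `k`, the number of size-`k` maxPD sets is `n − k + 1`. -/
theorem m_caterpillar_eq
    {V : Type} [Fintype V] [DecidableEq V] (T : PhyloTree V)
    (hU : T.Ultrametric) (hCat : T.IsCaterpillar) (n k : ℕ)
    (hn : n = T.leaves.ncard) (hk : 1 ≤ k) (hbv : T.IsBranchingValue k) :
    T.m k = n - k + 1 := by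
  obtain ⟨hB, p₀, ⟨x₁, x₂, c, -, rfl, hL₁, hL₂, hx₁, hx₂⟩, huniq⟩ := hCat
  have hc : ∀ w, ¬ T.IsLeaf w → T.anc w c := fun w => T.anc_of_not_isLeaf huniq hx₁ hB
  subst hn
  rcases (T.le_ncard_leaves_of_isBranchingValue hbv).eq_or_lt with rfl | hlt
  · rw [T.m_ncard_leaves, Nat.sub_self]
  · obtain ⟨u, hu, hcard⟩ := T.exists_isTopSet_leaves huniq hx₁ hU hB hL₁ hL₂ hx₂ (j := k - 1)
      (by omega)
    have hm := T.m_eq_of_isTopSet hU hc (T.not_isLeaf_root_of_step hx₁) hu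
    rw [hcard, Nat.sub_add_cancel hk] at hm
    omega
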